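/- Let P be a nice polygon. Every maximal pair (v, w) of vertices of P labels a tile of the forward partition; indeed there is an unbounded region of the forward partition labelled by (v, w) and an unbounded region labelled by (w, v). -/

import Mathlib

open Set Bornology

noncomputable section

/-- The cross product (determinant) of two plane vectors. -/
def cross2 (a b : ℝ × ℝ) : ℝ := a.1 * b.2 - a.2 * b.1

/-- A nice polygon: a convex polygon in the plane, with vertices `vtx 0, …, vtx (n-1)`
listed clockwise (every other vertex lies strictly to the right of every directed edge),
no two of whose sides are parallel.  The field `far i` records the unique vertex of the
polygon farthest from the line supporting the `i`-th edge. -/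
structure NicePolygon where
  n : ℕ
  three_le : 3 ≤ n
  vtx : ZMod n → ℝ × ℝ
  strict_convex : ∀ i j : ZMod n, j ≠ i → j ≠ i + 1 →
    cross2 (vtx (i + 1) - vtx i) (vtx j - vtx i) < 0
  no_parallel : ∀ i j : ZMod n, i ≠ j →
    cross2 (vtx (i + 1) - vtx i) (vtx (j + 1) - vtx j) ≠ 0
  far : ZMod n → ZMod n
  far_spec : ∀ i j : ZMod n, j ≠ far i →
    cross2 (vtx (i + 1) - vtx i) (vtx (far i) - vtx i) <
      cross2 (vtx (i + 1) - vtx i) (vtx j - vtx i)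

namespace NicePolygon

variable (Q : NicePolygon)

/-- The polygon as a convex body. -/
def body : Set (ℝ × ℝ) := convexHull ℝ (Set.range Q.vtx)

def IsVertex (v : ℝ × ℝ) : Prop := ∃ i, Q.vtx i = v

def edgeDir (i : ZMod Q.n) : ℝ × ℝ := Q.vtx (i + 1) - Q.vtx i

/-- The (oriented) edge `e_i` as a set. -/
def edgeSet (i : ZMod Q.n) : Set (ℝ × ℝ) := segment ℝ (Q.vtx i) (Q.vtx (i + 1))

/-- Signed coordinate with respect to the line through edge `i`. -/
def sgn (i : ZMod Q.n) (x : ℝ × ℝ) : ℝ := cross2 (Q.edgeDir i) (x - Q.vtx i)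

/-- Signed distance datum of the farthest vertex from the line of edge `i`. -/
def depth (i : ZMod Q.n) : ℝ := Q.sgn i (Q.vtx (Q.far i))

/-- The vector `V_i = 2 (w - v)` where `v` is the head vertex of edge `i` and `w` the
farthest vertex from the line of edge `i`. -/
def vvec (i : ZMod Q.n) : ℝ × ℝ := (2 : ℝ) • (Q.vtx (Q.far i) - Q.vtx (i + 1))

/-- The pinwheel strip `Σ_i`: it is bounded by the line `L` through edge `i` and the
parallel line `L'` such that the farthest vertex is equidistant from `L` and `L'`. -/
def strip (i : ZMod Q.n) : Set (ℝ × ℝ) := {x | Q.sgn i x ∈ Set.uIcc 0 (2 * Q.depth i)}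

/-- The strip map `μ_i`: the identity on the interior of the strip; otherwise move by
`± V_i`, whichever is closer to the strip. -/
def stripMap (i : ZMod Q.n) (x : ℝ × ℝ) : ℝ × ℝ := by
  classical
  exact
    if x ∈ interior (Q.strip i) then x
    else if Metric.infDist (x + Q.vvec i) (Q.strip i)
            < Metric.infDist (x - Q.vvec i) (Q.strip i) then x + Q.vvec i
    else if Metric.infDist (x - Q.vvec i) (Q.strip i)
            < Metric.infDist (x + Q.vvec i) (Q.strip i) then x - Q.vvec i
    else x

/-- The pinwheel map `ψ*` on `ℝ² × ℤ/n`. -/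
def pinwheel (pk : (ℝ × ℝ) × ZMod Q.n) : (ℝ × ℝ) × ZMod Q.n := by
  classical
  exact
    if Q.stripMap (pk.2 + 1) pk.1 = pk.1 then (pk.1, pk.2 + 1)
    else (Q.stripMap (pk.2 + 1) pk.1, pk.2)

/-- The outer billiards relation: the segment from `x` to `y` is tangent to the polygon
at its midpoint and the polygon lies (weakly) to the right of the ray from `x` to `y`. -/
def obRel (x y : ℝ × ℝ) : Prop :=
  x ∉ Q.body ∧ midpoint ℝ x y ∈ Q.body ∧ ∀ z ∈ Q.body, cross2 (y - x) (z - x) ≤ 0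

/-- The square outer billiards map `ψ`, as a relation; it is the identity on the
polygon itself. -/
def sqRel (p q : ℝ × ℝ) : Prop :=
  (p ∈ Q.body ∧ q = p) ∨ ∃ r, Q.obRel p r ∧ Q.obRel r q

/-- The tile of the forward partition labelled by the ordered vertex pair `(v, w)`:
the set of points whose first tangent vertex is `v` and whose second is `w`, so that
`ψ(p) = p + 2(w - v)` there. -/
def tile (v w : ℝ × ℝ) : Set (ℝ × ℝ) :=
  {p | Q.obRel p ((2 : ℝ) • v - p) ∧
       Q.obRel ((2 : ℝ) • v - p) ((2 : ℝ) • w - (2 : ℝ) • v + p)}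

/-- The value of the square outer billiards map on the tile labelled `(v, w)`. -/
def psiOn (v w p : ℝ × ℝ) : ℝ × ℝ := p + (2 : ℝ) • (w - v)

/-- A (nonempty) tile of the forward partition. -/
def IsForwardTile (T : Set (ℝ × ℝ)) : Prop :=
  ∃ v w, Q.IsVertex v ∧ Q.IsVertex w ∧ T = Q.tile v w ∧ T.Nonempty

/-- A strip: the region between two distinct parallel lines. -/
def IsStrip (S : Set (ℝ × ℝ)) : Prop :=
  ∃ (d : ℝ × ℝ) (c₁ c₂ : ℝ), d ≠ 0 ∧ c₁ < c₂ ∧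
    S = {x | c₁ ≤ cross2 d x ∧ cross2 d x ≤ c₂}

/-- A minimal strip: it contains the interior of the polygon in its interior and
no proper sub-strip does so. -/
def IsMinimalStrip (S : Set (ℝ × ℝ)) : Prop :=
  IsStrip S ∧ interior Q.body ⊆ interior S ∧
    ∀ S', IsStrip S' → interior Q.body ⊆ interior S' → S' ⊆ S → S' = S

/-- `(v, w)` is a maximal pair: some minimal strip has `v` and `w` on its two distinct
boundary lines. -/
def MaximalPair (v w : ℝ × ℝ) : Prop :=
  Q.IsVertex v ∧ Q.IsVertex w ∧
    ∃ (d : ℝ × ℝ) (c₁ c₂ : ℝ), d ≠ 0 ∧ c₁ < c₂ ∧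
      Q.IsMinimalStrip {x | c₁ ≤ cross2 d x ∧ cross2 d x ≤ c₂} ∧
      ((cross2 d v = c₁ ∧ cross2 d w = c₂) ∨ (cross2 d v = c₂ ∧ cross2 d w = c₁))

/-- A spoke: the segment joining the two vertices of a maximal pair. -/
def IsSpoke (S : Set (ℝ × ℝ)) : Prop := ∃ v w, Q.MaximalPair v w ∧ S = segment ℝ v w

/-- The spoke assigned to edge `i` by the clockwise correspondence: it joins the head
vertex of edge `i` to the vertex farthest from the line through edge `i`. -/
def spoke (i : ZMod Q.n) : Set (ℝ × ℝ) := segment ℝ (Q.vtx (i + 1)) (Q.vtx (Q.far i))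

/-- The endpoint pair of the spoke `S_i`. -/
def spokeEnds (i : ZMod Q.n) : Set (ℝ × ℝ) := {Q.vtx (i + 1), Q.vtx (Q.far i)}

/-- `S_j` is special if `S_{j-1}`, `S_j`, `S_{j+1}` share a common vertex. -/
def SpecialSpoke (j : ZMod Q.n) : Prop :=
  (Q.spokeEnds (j - 1) ∩ Q.spokeEnds j ∩ Q.spokeEnds (j + 1)).Nonempty

/-- The boundary arc starting at vertex `i` and going clockwise through `s` edges. -/
def cwArc (i : ZMod Q.n) (s : ℕ) : Set (ℝ × ℝ) :=
  ⋃ t ∈ Finset.range s,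
    segment ℝ (Q.vtx (i + (t : ZMod Q.n))) (Q.vtx (i + (t : ZMod Q.n) + 1))

/-- `x` is a vertex on the clockwise path along the boundary from `v` to `w`. -/
def OnCwArc (v x w : ℝ × ℝ) : Prop :=
  ∃ (i : ZMod Q.n) (s t : ℕ), s < Q.n ∧ t ≤ s ∧
    v = Q.vtx i ∧ w = Q.vtx (i + (s : ZMod Q.n)) ∧ x = Q.vtx (i + (t : ZMod Q.n))

/-- `(v, x)` is an admissible pair: `x` lies on the clockwise path from `v` to some
vertex `w` making `(v, w)` a maximal pair. -/
def AdmissiblePair (v x : ℝ × ℝ) : Prop := ∃ w, Q.MaximalPair v w ∧ Q.OnCwArc v x w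

/-- An arc of the boundary of the polygon with endpoints `p` and `q`. -/
def IsBdryArcFromTo (A : Set (ℝ × ℝ)) (p q : ℝ × ℝ) : Prop :=
  ∃ (i : ZMod Q.n) (s : ℕ), s ≤ Q.n ∧
    ((p = Q.vtx i ∧ q = Q.vtx (i + (s : ZMod Q.n))) ∨
     (q = Q.vtx i ∧ p = Q.vtx (i + (s : ZMod Q.n)))) ∧
    A = Q.cwArc i s

/-- Four vertices in counterclockwise cyclic order on the boundary (the vertices are
indexed clockwise, so counterclockwise order is decreasing index). -/
def CcwOrdered4 (p₁ p₂ p₃ p₄ : ℝ × ℝ) : Prop :=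
  ∃ (i : ZMod Q.n) (t₂ t₃ t₄ : ℕ), 0 < t₂ ∧ t₂ < t₃ ∧ t₃ < t₄ ∧ t₄ < Q.n ∧
    p₁ = Q.vtx i ∧ p₂ = Q.vtx (i - (t₂ : ZMod Q.n)) ∧
    p₃ = Q.vtx (i - (t₃ : ZMod Q.n)) ∧ p₄ = Q.vtx (i - (t₄ : ZMod Q.n))

end NicePolygon

/-- An admissible path of a nice polygon: an odd number of spokes traversed compatibly
with the cyclic order of the spokes (indices lifted to `ℤ`, strictly increasing, and
not wrapping all the way around the polygon), with consecutive spokes sharing an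
endpoint; `ept k` is the initial endpoint of the `k`-th spoke of the path and
`ept len` the final endpoint. -/
structure AdmissiblePath (Q : NicePolygon) where
  len : ℕ
  pos : 0 < len
  odd : Odd len
  idx : Fin len → ℤ
  mono : StrictMono idx
  base_nonneg : 0 ≤ idx ⟨0, pos⟩
  base_lt : idx ⟨0, pos⟩ < (Q.n : ℤ)
  span : idx ⟨len - 1, by omega⟩ - idx ⟨0, pos⟩ < (Q.n : ℤ)
  ept : Fin (len + 1) → ℝ × ℝ
  spoke_eq : ∀ k : Fin len,
    ({ept k.castSucc, ept k.succ} : Set (ℝ × ℝ)) = Q.spokeEnds ((idx k : ZMod Q.n))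

namespace AdmissiblePath

variable {Q : NicePolygon} (γ : AdmissiblePath Q)

/-- The index `a` of the first spoke of the path `a → b`. -/
def aIdx : ℤ := γ.idx ⟨0, γ.pos⟩

/-- The index `b` of the last spoke of the path `a → b`. -/
def bIdx : ℤ := γ.idx ⟨γ.len - 1, by have := γ.pos; omega⟩

/-- The first vertex of the path. -/
def firstV : ℝ × ℝ := γ.ept 0

/-- The last vertex of the path. -/
def lastV : ℝ × ℝ := γ.ept (Fin.last γ.len)

/-- The tile `T(a → b)` of the forward partition corresponding to the path. -/
def tileSet : Set (ℝ × ℝ) := Q.tile γ.firstV γ.lastV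

end AdmissiblePath

namespace NicePolygon

variable (Q : NicePolygon)

/-- Forward-unbounded orbits of the square outer billiards map. -/
def FwdUnbOrbitPsi (O : Set (ℝ × ℝ)) : Prop :=
  ∃ o : ℤ → ℝ × ℝ, (∀ t, Q.sqRel (o t) (o (t + 1))) ∧ O = Set.range o ∧
    ¬ Bornology.IsBounded (o '' Set.Ici (0 : ℤ))

/-- Forward-unbounded orbits of the pinwheel map. -/
def FwdUnbOrbitPin (O : Set ((ℝ × ℝ) × ZMod Q.n)) : Prop :=
  ∃ o : ℤ → (ℝ × ℝ) × ZMod Q.n, (∀ t, o (t + 1) = Q.pinwheel (o t)) ∧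
    O = Set.range o ∧
    ¬ Bornology.IsBounded ((fun t => (o t).1) '' Set.Ici (0 : ℤ))

/-- An orbit of the pinwheel map is natural (w.r.t. the section `ι`) if it lies in the
range of `ι` sufficiently far from the origin. -/
def NaturalOrbit (ι : ℝ × ℝ → (ℝ × ℝ) × ZMod Q.n)
    (O : Set ((ℝ × ℝ) × ZMod Q.n)) : Prop :=
  ∃ R : ℝ, ∀ x ∈ O, R < ‖x.1‖ → x ∈ Set.range ι

/-- `X̂ = ⋃_j Σ_j × {j}`. -/
def Xhat : Set ((ℝ × ℝ) × ZMod Q.n) := {pk | pk.1 ∈ Q.strip pk.2}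

/-- The first-return relation of the pinwheel map to `X̂`. -/
def retRel (x y : (ℝ × ℝ) × ZMod Q.n) : Prop :=
  x ∈ Q.Xhat ∧ ∃ r : ℕ, 1 ≤ r ∧ y = Q.pinwheel^[r] x ∧ y ∈ Q.Xhat ∧
    ∀ s, 1 ≤ s → s < r → Q.pinwheel^[s] x ∉ Q.Xhat

/-- Forward-unbounded orbits of the first-return map `ψ̂` of the pinwheel map to `X̂`. -/
def FwdUnbOrbitRet (O : Set ((ℝ × ℝ) × ZMod Q.n)) : Prop :=
  ∃ o : ℤ → (ℝ × ℝ) × ZMod Q.n, (∀ t, Q.retRel (o t) (o (t + 1))) ∧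
    O = Set.range o ∧
    ¬ Bornology.IsBounded ((fun t => (o t).1) '' Set.Ici (0 : ℤ))

/-- The first-return relation `Ψ` of the square outer billiards map to the strip `Σ₁`. -/
def psiRetRel (p q : ℝ × ℝ) : Prop :=
  p ∈ Q.strip 1 ∧ q ∈ Q.strip 1 ∧
    ∃ (r : ℕ) (o : ℕ → ℝ × ℝ), 1 ≤ r ∧ o 0 = p ∧ o r = q ∧
      (∀ s < r, Q.sqRel (o s) (o (s + 1))) ∧
      ∀ s, 0 < s → s < r → o s ∉ Q.strip 1

/-- The pinwheel return map `Ψ̂ = (ψ̂)ⁿ` on `Σ₁` (identified with `Σ₁ × {1}`),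
as a relation. -/
def hatPsiRel (p q : ℝ × ℝ) : Prop :=
  ∃ o : ℕ → (ℝ × ℝ) × ZMod Q.n, o 0 = (p, 1) ∧ o Q.n = (q, 1) ∧
    ∀ s < Q.n, Q.retRel (o s) (o (s + 1))

/-- The polygon is quasirational if it can be rescaled so that the areas of the `n`
parallelograms `Σ_j ∩ Σ_{j+1}` are all integers. -/
def Quasirational : Prop :=
  ∃ lam : ℝ, 0 < lam ∧ ∀ j : ZMod Q.n, ∃ z : ℤ,
    lam ^ 2 * (MeasureTheory.volume (Q.strip j ∩ Q.strip (j + 1))).toReal = (z : ℝ)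

end NicePolygon

/-- Forward-unbounded orbits of a relation on the plane. -/
def FwdUnbOrbitRel (Rel : ℝ × ℝ → ℝ × ℝ → Prop) (O : Set (ℝ × ℝ)) : Prop :=
  ∃ o : ℤ → ℝ × ℝ, (∀ t, Rel (o t) (o (t + 1))) ∧ O = Set.range o ∧
    ¬ Bornology.IsBounded (o '' Set.Ici (0 : ℤ))

section MyAux
open Filter

lemma cross2_zero_right (a : ℝ × ℝ) : cross2 a 0 = 0 := by simp [cross2]
lemma cross2_self (a : ℝ × ℝ) : cross2 a a = 0 := by simp [cross2]; ring
lemma cross2_smul_left (r : ℝ) (a b : ℝ × ℝ) : cross2 (r • a) b = r * cross2 a b := by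
  simp [cross2]; ring
lemma cross2_smul_right (r : ℝ) (a b : ℝ × ℝ) : cross2 a (r • b) = r * cross2 a b := by
  simp [cross2]; ring
lemma cross2_add_left (a b c : ℝ × ℝ) : cross2 (a + b) c = cross2 a c + cross2 b c := by
  simp [cross2]; ring
lemma cross2_add_right (a b c : ℝ × ℝ) : cross2 a (b + c) = cross2 a b + cross2 a c := by
  simp [cross2]; ring
lemma cross2_sub_right (a b c : ℝ × ℝ) : cross2 a (b - c) = cross2 a b - cross2 a c := by
  simp [cross2]; ring
lemma cross2_sub_left (a b c : ℝ × ℝ) : cross2 (a - b) c = cross2 a c - cross2 b c := by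
  simp [cross2]; ring
lemma cross2_neg_left (a b : ℝ × ℝ) : cross2 (-a) b = - cross2 a b := by simp [cross2]; ring
lemma cross2_anticomm (a b : ℝ × ℝ) : cross2 a b = - cross2 b a := by simp [cross2]; ring

lemma exists_smul_of_cross2_eq_zero {d x : ℝ × ℝ} (hd : d ≠ 0) (h : cross2 d x = 0) :
    ∃ s : ℝ, x = s • d := by
  have hd' : d.1 ≠ 0 ∨ d.2 ≠ 0 := by
    by_contra hc
    push_neg at hc
    exact hd (Prod.ext hc.1 hc.2)
  simp only [cross2] at h
  rcases hd' with h1 | h2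
  · refine ⟨x.1 / d.1, Prod.ext ?_ ?_⟩ <;> simp only [Prod.smul_fst, Prod.smul_snd, smul_eq_mul]
    · field_simp
    · field_simp; nlinarith [h]
  · refine ⟨x.2 / d.2, Prod.ext ?_ ?_⟩ <;> simp only [Prod.smul_fst, Prod.smul_snd, smul_eq_mul]
    · field_simp; nlinarith [h]
    · field_simp

lemma convex_cross2_le (c a : ℝ × ℝ) : Convex ℝ {z : ℝ × ℝ | cross2 c (z - a) ≤ 0} := by
  intro x hx y hy s t hs ht hst
  simp only [Set.mem_setOf_eq] at hx hy ⊢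
  have key : cross2 c (s • x + t • y - a) = s * cross2 c (x - a) + t * cross2 c (y - a) := by
    simp only [cross2, Prod.fst_add, Prod.snd_add, Prod.fst_sub, Prod.snd_sub,
      Prod.smul_fst, Prod.smul_snd, smul_eq_mul]
    linear_combination (c.1 * a.2 - c.2 * a.1) * hst
  rw [key]
  have := mul_nonneg hs (neg_nonneg.2 hx)
  have := mul_nonneg ht (neg_nonneg.2 hy)
  nlinarith

lemma eventually_norm_gt (c u : ℝ × ℝ) (hu : u ≠ 0) (K : ℝ) :
    ∀ᶠ t : ℝ in atTop, K < ‖c + t • u‖ := by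
  have hu' : 0 < ‖u‖ := norm_pos_iff.2 hu
  filter_upwards [eventually_ge_atTop ((K + ‖c‖ + 1) / ‖u‖), eventually_ge_atTop (0:ℝ)]
    with t ht ht0
  rw [div_le_iff₀ hu'] at ht
  have h3 : ‖(c + t • u) - c‖ ≤ ‖c + t • u‖ + ‖c‖ := norm_sub_le _ _
  have h4 : (c + t • u) - c = t • u := by abel
  rw [h4, norm_smul, Real.norm_eq_abs, abs_of_nonneg ht0] at h3
  nlinarith

lemma ev_atTop_nonpos {C m : ℝ} (hm : m < 0) : ∀ᶠ t : ℝ in atTop, C + t * m ≤ 0 := by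
  filter_upwards [eventually_ge_atTop (C / (-m))] with t ht
  rw [div_le_iff₀ (by linarith : (0:ℝ) < -m)] at ht
  nlinarith

lemma ev_nhdsGT_nonneg {A B : ℝ} (hA : 0 < A) :
    ∀ᶠ ε : ℝ in nhdsWithin 0 (Set.Ioi 0), 0 ≤ A + ε * B := by
  have hδ : (0:ℝ) < A / (|B| + 1) := by positivity
  filter_upwards [Ioo_mem_nhdsGT_of_mem ⟨le_refl (0:ℝ), hδ⟩] with ε hε
  rw [Set.mem_Ioo] at hε
  have h1 : ε * (|B| + 1) < A := by
    have := hε.2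
    rw [lt_div_iff₀ (by positivity : (0:ℝ) < |B| + 1)] at this
    exact this
  have h2 : -(ε * |B|) ≤ ε * B := by nlinarith [neg_abs_le B, hε.1]
  nlinarith

lemma ev_nhdsGT_neg {A B : ℝ} (hA : A < 0) :
    ∀ᶠ ε : ℝ in nhdsWithin 0 (Set.Ioi 0), A + ε * B < 0 := by
  have hδ : (0:ℝ) < -A / (|B| + 1) := by
    have : (0:ℝ) < -A := by linarith
    positivity
  filter_upwards [Ioo_mem_nhdsGT_of_mem ⟨le_refl (0:ℝ), hδ⟩] with ε hε
  rw [Set.mem_Ioo] at hε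
  have h1 : ε * (|B| + 1) < -A := by
    have := hε.2
    rw [lt_div_iff₀ (by positivity : (0:ℝ) < |B| + 1)] at this
    exact this
  nlinarith [le_abs_self B, hε.1]

lemma midpoint_helper (x y m : ℝ × ℝ) (h : x + y = (2:ℝ) • m) : midpoint ℝ x y = m := by
  rw [midpoint_eq_smul_add, h, smul_smul, invOf_mul_self, one_smul]

namespace NicePolygon

variable (Q : NicePolygon)

lemma vtx_mem_body (i : ZMod Q.n) : Q.vtx i ∈ Q.body :=
  subset_convexHull ℝ _ ⟨i, rfl⟩

lemma body_isBounded : Bornology.IsBounded Q.body := by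
  haveI : NeZero Q.n := ⟨by have := Q.three_le; omega⟩
  rw [body, isBounded_convexHull]
  exact (Set.finite_range Q.vtx).isBounded

lemma body_cross2_le (c a : ℝ × ℝ) (h : ∀ i, cross2 c (Q.vtx i - a) ≤ 0) :
    ∀ z ∈ Q.body, cross2 c (z - a) ≤ 0 := by
  intro z hz
  have hsub : Q.body ⊆ {z : ℝ × ℝ | cross2 c (z - a) ≤ 0} :=
    convexHull_min (by rintro _ ⟨i, rfl⟩; exact h i) (convex_cross2_le c a)
  exact hsub hz

lemma adj_of_support {D : ℝ × ℝ} {i j : ZMod Q.n} {s : ℝ}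
    (hall : ∀ k, 0 ≤ cross2 D (Q.vtx k - Q.vtx i))
    (hs : Q.vtx j - Q.vtx i = s • D) (hij : Q.vtx j ≠ Q.vtx i) :
    (s < 0 → Q.vtx (i + 1) - Q.vtx i = s • D) ∧
    (0 < s → Q.vtx (j + 1) - Q.vtx j = (-s) • D) := by
  have hjine : j ≠ i := fun h => hij (by rw [h])
  constructor
  · intro hneg
    by_cases hji1 : j = i + 1
    · rw [← hji1]; exact hs
    · exfalso
      have hsc := Q.strict_convex i j hjine hji1
      rw [hs, cross2_smul_right] at hsc
      have h2 := hall (i + 1)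
      rw [cross2_anticomm] at h2
      nlinarith
  · intro hpos
    by_cases hij1 : i = j + 1
    · rw [← hij1]
      have : Q.vtx i - Q.vtx j = (-s) • D := by
        rw [neg_smul, ← hs]; abel
      exact this
    · exfalso
      have hsc := Q.strict_convex j i hjine.symm hij1
      have hsub : Q.vtx i - Q.vtx j = (-s) • D := by rw [neg_smul, ← hs]; abel
      rw [hsub, cross2_smul_right] at hsc
      -- hsc : -s * cross2 (vtx (j+1) - vtx j) D < 0, so cross2 (vtx(j+1) - vtx j) D > 0
      have h2 := hall (j + 1)
      have h3 : Q.vtx (j+1) - Q.vtx i = (Q.vtx (j+1) - Q.vtx j) + s • D := by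
        rw [← hs]; abel
      rw [h3, cross2_add_right, cross2_smul_right, cross2_self] at h2
      rw [cross2_anticomm] at h2
      nlinarith

end NicePolygon
end MyAux

section MyAux2
open Filter

namespace NicePolygon

variable (Q : NicePolygon)

lemma tile_unbounded (v w u : ℝ × ℝ) (hv : Q.IsVertex v) (hw : Q.IsVertex w) (hu : u ≠ 0)
    (H1 : ∀ i, 0 ≤ cross2 u (Q.vtx i - v))
    (H2 : ∀ i, ∀ᶠ t : ℝ in atTop,
      cross2 (w - v) (Q.vtx i - w) + t * cross2 u (Q.vtx i - w) ≤ 0) :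
    ¬ Bornology.IsBounded (Q.tile v w) := by
  haveI : NeZero Q.n := ⟨by have := Q.three_le; omega⟩
  obtain ⟨iv, hiv⟩ := hv
  obtain ⟨iw, hiw⟩ := hw
  intro hbd
  obtain ⟨Ct, hCt⟩ := isBounded_iff_forall_norm_le.1 hbd
  obtain ⟨Rb, hRb⟩ := isBounded_iff_forall_norm_le.1 Q.body_isBounded
  have hev : ∀ᶠ t : ℝ in atTop, ((0 ≤ t ∧
      ∀ i, cross2 (w - v) (Q.vtx i - w) + t * cross2 u (Q.vtx i - w) ≤ 0) ∧
      (max Rb Ct < ‖v + t • u‖ ∧ Rb < ‖v + t • (-u)‖)) :=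
    ((eventually_ge_atTop 0).and (eventually_all.2 H2)).and
      ((eventually_norm_gt v u hu _).and (eventually_norm_gt v (-u) (neg_ne_zero.2 hu) Rb))
  obtain ⟨t, ⟨ht0, hH2⟩, hn1, hn2⟩ := hev.exists
  set p := v + t • u with hp
  have hvb : v ∈ Q.body := by rw [← hiv]; exact Q.vtx_mem_body iv
  have hwb : w ∈ Q.body := by rw [← hiw]; exact Q.vtx_mem_body iw
  have hp2 : (2:ℝ) • v - p = v + t • (-u) := by rw [hp]; module
  have hpb : p ∉ Q.body := by
    intro hmem
    have := hRb p hmem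
    have := lt_of_le_of_lt (le_max_left Rb Ct) hn1
    linarith
  have hqb : (2:ℝ) • v - p ∉ Q.body := by
    rw [hp2]
    intro hmem
    have := hRb _ hmem
    linarith
  have hptile : p ∈ Q.tile v w := by
    refine ⟨⟨hpb, ?_, ?_⟩, ⟨hqb, ?_, ?_⟩⟩
    · have hm : midpoint ℝ p ((2:ℝ) • v - p) = v := midpoint_helper _ _ _ (by abel)
      rw [hm]; exact hvb
    · intro z hz
      have key : (2:ℝ) • v - p - p = (-(2*t)) • u := by rw [hp]; module
      rw [key, cross2_smul_left]
      have h2 : cross2 u (z - p) = cross2 u (z - v) := by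
        rw [hp, show z - (v + t • u) = (z - v) - t • u by abel, cross2_sub_right,
          cross2_smul_right, cross2_self]
        ring
      rw [h2]
      have h3 : 0 ≤ cross2 u (z - v) := by
        have h4 := Q.body_cross2_le (-u) v (fun i => by
          rw [cross2_neg_left]; linarith [H1 i]) z hz
        rw [cross2_neg_left] at h4
        linarith
      nlinarith
    · have hm : midpoint ℝ ((2:ℝ) • v - p) ((2:ℝ) • w - (2:ℝ) • v + p) = w :=
        midpoint_helper _ _ _ (by abel)
      rw [hm]; exact hwb
    · intro z hz
      have key : ((2:ℝ) • w - (2:ℝ) • v + p) - ((2:ℝ) • v - p) = (2:ℝ) • ((w - v) + t • u) := by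
        rw [hp]; module
      rw [key, cross2_smul_left]
      have h2 : cross2 ((w - v) + t • u) (z - ((2:ℝ) • v - p)) =
          cross2 ((w - v) + t • u) (z - w) := by
        have h5 : z - ((2:ℝ) • v - p) = (z - w) + ((w - v) + t • u) := by rw [hp]; module
        rw [h5, cross2_add_right, cross2_self, add_zero]
      rw [h2]
      have h3 : ∀ i, cross2 ((w - v) + t • u) (Q.vtx i - w) ≤ 0 := by
        intro i
        rw [cross2_add_left, cross2_smul_left]
        exact hH2 i
      have h4 := Q.body_cross2_le _ w h3 z hz
      linarith
  have h6 := hCt p hptile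
  have h7 := lt_of_le_of_lt (le_max_right Rb Ct) hn1
  linarith

lemma affineSpan_top : affineSpan ℝ (Set.range Q.vtx) = ⊤ := by
  haveI : NeZero Q.n := ⟨by have := Q.three_le; omega⟩
  rw [AffineSubspace.affineSpan_eq_top_iff_vectorSpan_eq_top_of_nonempty ℝ _ _ (Set.range_nonempty _)]
  have h20 : ((2:ℕ) : ZMod Q.n) ≠ ((0:ℕ) : ZMod Q.n) := by
    intro h
    have h' := congrArg ZMod.val h
    rw [ZMod.val_cast_of_lt (by have := Q.three_le; omega),
      ZMod.val_cast_of_lt (by have := Q.three_le; omega)] at h'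
    omega
  have h21 : ((2:ℕ) : ZMod Q.n) ≠ ((1:ℕ) : ZMod Q.n) := by
    intro h
    have h' := congrArg ZMod.val h
    rw [ZMod.val_cast_of_lt (by have := Q.three_le; omega),
      ZMod.val_cast_of_lt (by have := Q.three_le; omega)] at h'
    omega
  have hsc := Q.strict_convex 0 2 (by simpa using h20) (by simpa using h21)
  set e1 := Q.vtx (0 + 1) - Q.vtx 0 with he1
  set e2 := Q.vtx 2 - Q.vtx 0 with he2
  have hdet : cross2 e1 e2 ≠ 0 := ne_of_lt hsc
  rw [eq_top_iff]
  intro x _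
  have hmem1 : e1 ∈ vectorSpan ℝ (Set.range Q.vtx) := by
    exact vsub_mem_vectorSpan (k := ℝ) (V := ℝ × ℝ) (P := ℝ × ℝ)
      (Set.mem_range_self (0 + 1 : ZMod Q.n)) (Set.mem_range_self (0 : ZMod Q.n))
  have hmem2 : e2 ∈ vectorSpan ℝ (Set.range Q.vtx) := by
    exact vsub_mem_vectorSpan (k := ℝ) (V := ℝ × ℝ) (P := ℝ × ℝ)
      (Set.mem_range_self (2 : ZMod Q.n)) (Set.mem_range_self (0 : ZMod Q.n))
  have hx : x ∈ Submodule.span ℝ ({e1, e2} : Set (ℝ × ℝ)) := by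
    rw [Submodule.mem_span_pair]
    have hdet' : e1.1 * e2.2 - e1.2 * e2.1 ≠ 0 := hdet
    refine ⟨(x.1 * e2.2 - x.2 * e2.1) / (e1.1 * e2.2 - e1.2 * e2.1),
      (e1.1 * x.2 - e1.2 * x.1) / (e1.1 * e2.2 - e1.2 * e2.1), ?_⟩
    apply Prod.ext <;>
      simp only [Prod.fst_add, Prod.snd_add, Prod.smul_fst, Prod.smul_snd, smul_eq_mul] <;>
      rw [div_mul_eq_mul_div, div_mul_eq_mul_div, ← add_div, div_eq_iff hdet'] <;> ring
  have hle : Submodule.span ℝ ({e1, e2} : Set (ℝ × ℝ)) ≤ vectorSpan ℝ (Set.range Q.vtx) := by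
    rw [Submodule.span_le]
    rintro y (rfl | rfl)
    · exact hmem1
    · exact hmem2
  exact hle hx

lemma interior_body_nonempty : (interior Q.body).Nonempty := by
  have hb : Q.body = convexHull ℝ (Set.range Q.vtx) := rfl
  rw [hb, Convex.interior_nonempty_iff_affineSpan_eq_top (convex_convexHull ℝ _),
    affineSpan_convexHull]
  exact Q.affineSpan_top

lemma body_subset_closed {S : Set (ℝ × ℝ)} (hS : IsClosed S)
    (hsub : interior Q.body ⊆ S) : Q.body ⊆ S := by
  obtain ⟨y, hy⟩ := Q.interior_body_nonempty
  intro x hx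
  have hconv : Convex ℝ Q.body := convex_convexHull ℝ _
  set f : ℝ → ℝ × ℝ := fun b => (1 - b) • x + b • y with hf
  have hcont : Continuous f := by fun_prop
  have hev : ∀ᶠ b in nhdsWithin 0 (Set.Ioi 0), f b ∈ S := by
    filter_upwards [Ioo_mem_nhdsGT_of_mem ⟨le_refl (0:ℝ), one_pos⟩] with b hb
    rw [Set.mem_Ioo] at hb
    exact hsub (hconv.combo_self_interior_mem_interior hx hy (by linarith) hb.1 (by ring))
  have htend : Filter.Tendsto f (nhdsWithin 0 (Set.Ioi 0)) (nhds x) := by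
    have h0 : Filter.Tendsto f (nhds 0) (nhds (f 0)) := hcont.tendsto 0
    have hf0 : f 0 = x := by simp [hf]
    rw [hf0] at h0
    exact h0.mono_left nhdsWithin_le_nhds
  exact hS.mem_of_tendsto htend hev

end NicePolygon
end MyAux2

section MyAux3
open Filter

namespace NicePolygon

variable (Q : NicePolygon)

lemma unbounded_of_strip_data (v w d : ℝ × ℝ) (c₁ c₂ : ℝ) (hd : d ≠ 0) (hc : c₁ < c₂)
    (hv : Q.IsVertex v) (hw : Q.IsVertex w)
    (hv1 : cross2 d v = c₁) (hw2 : cross2 d w = c₂)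
    (hall : ∀ i, c₁ ≤ cross2 d (Q.vtx i) ∧ cross2 d (Q.vtx i) ≤ c₂) :
    ¬ Bornology.IsBounded (Q.tile v w) := by
  haveI : NeZero Q.n := ⟨by have := Q.three_le; omega⟩
  obtain ⟨iv, hiv⟩ := hv
  obtain ⟨iw, hiw⟩ := hw
  have hbotsup : ∀ k, 0 ≤ cross2 d (Q.vtx k - v) := fun k => by
    rw [cross2_sub_right, hv1]; linarith [(hall k).1]
  have htopsup : ∀ k, cross2 d (Q.vtx k - w) ≤ 0 := fun k => by
    rw [cross2_sub_right, hw2]; linarith [(hall k).2]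
  have hcwd : cross2 (w - v) d = c₁ - c₂ := by
    rw [cross2_anticomm, cross2_sub_right, hv1, hw2]; ring
  by_cases hB : ∃ j, ∃ r : ℝ, Q.vtx j = w + r • d ∧ r < 0
  · -- a vertex strictly "before" w on the top line: perturb the direction
    obtain ⟨j₀, r₀, hb0, hr0⟩ := hB
    have hbw : Q.vtx j₀ ≠ w := by
      intro h
      rw [h] at hb0
      have : r₀ • d = 0 := by
        have := hb0.symm
        rwa [add_eq_left] at this
      rcases smul_eq_zero.1 this with h' | h'
      · linarith
      · exact hd h'
    have hbwi : Q.vtx j₀ ≠ Q.vtx iw := by rw [hiw]; exact hbw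
    have htopsup' : ∀ k, 0 ≤ cross2 (-d) (Q.vtx k - Q.vtx iw) := fun k => by
      rw [hiw, cross2_neg_left]; linarith [htopsup k]
    have hs0 : Q.vtx j₀ - Q.vtx iw = (-r₀) • (-d) := by
      rw [hiw, hb0, smul_neg, neg_smul, neg_neg]; abel
    have hedge0 : Q.vtx (j₀ + 1) - Q.vtx j₀ = (-(-r₀)) • (-d) :=
      (Q.adj_of_support htopsup' hs0 hbwi).2 (by linarith)
    have hedge0' : Q.vtx (j₀ + 1) - Q.vtx j₀ = (-r₀) • d := by
      rw [hedge0, neg_smul, neg_smul, smul_neg, neg_neg, neg_smul]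
    have Hbot : ∀ (k : ZMod Q.n) (s : ℝ), Q.vtx k = v + s • d → 0 ≤ s := by
      intro k s hk
      by_contra hneg
      push_neg at hneg
      have hkv : Q.vtx k ≠ Q.vtx iv := by
        rw [hiv, hk]
        intro h
        have : s • d = 0 := by rwa [add_eq_left] at h
        rcases smul_eq_zero.1 this with h' | h'
        · linarith
        · exact hd h'
      have hsub : Q.vtx k - Q.vtx iv = s • d := by rw [hiv, hk]; abel
      have hedge1 := (Q.adj_of_support (fun k' => by rw [hiv]; exact hbotsup k') hsub hkv).1 hneg
      have hne : iv ≠ j₀ := by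
        intro h
        rw [h] at hiv
        rw [hiv] at hb0
        have : cross2 d v = c₂ := by
          rw [hb0, cross2_add_right, cross2_smul_right, cross2_self, hw2]; ring
        rw [hv1] at this
        linarith
      exact Q.no_parallel iv j₀ hne (by
        rw [hedge1, hedge0', cross2_smul_left, cross2_smul_right, cross2_self]; ring)
    have Htop : ∀ (k : ZMod Q.n) (r : ℝ), Q.vtx k = w + r • d → Q.vtx k = w ∨ r < 0 := by
      intro k r hk
      rcases lt_trichotomy r 0 with h | h | h
      · exact Or.inr h
      · left; rw [hk, h, zero_smul, add_zero]
      · exfalso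
        have hkw : Q.vtx k ≠ Q.vtx iw := by
          rw [hiw, hk]
          intro h'
          have : r • d = 0 := by rwa [add_eq_left] at h'
          rcases smul_eq_zero.1 this with h'' | h''
          · linarith
          · exact hd h''
        have hsub : Q.vtx k - Q.vtx iw = (-r) • (-d) := by
          rw [hiw, hk, smul_neg, neg_smul, neg_neg]; abel
        have hedge2 := (Q.adj_of_support htopsup' hsub hkw).1 (by linarith)
        have hedge2' : Q.vtx (iw + 1) - Q.vtx iw = r • d := by
          rw [hedge2, neg_smul, smul_neg, neg_neg]
        have hne2 : iw ≠ j₀ := fun h' => hbwi (by rw [h'])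
        exact Q.no_parallel iw j₀ hne2 (by
          rw [hedge2', hedge0', cross2_smul_left, cross2_smul_right, cross2_self]; ring)
    set q : ℝ × ℝ := (d.2, -d.1) with hq
    have hqd : cross2 q d = d.1 ^ 2 + d.2 ^ 2 := by simp [cross2, hq]; ring
    have hqdpos : 0 < cross2 q d := by
      rw [hqd]
      have hd' : d.1 ≠ 0 ∨ d.2 ≠ 0 := by
        by_contra hcc
        push_neg at hcc
        exact hd (Prod.ext hcc.1 hcc.2)
      rcases hd' with h | h
      · positivity
      · positivity
    have hev : ∀ᶠ ε : ℝ in nhdsWithin 0 (Set.Ioi 0),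
        ((∀ i, 0 ≤ cross2 (d + ε • q) (Q.vtx i - v)) ∧
        (∀ i, ∀ᶠ t : ℝ in atTop,
          cross2 (w - v) (Q.vtx i - w) + t * cross2 (d + ε • q) (Q.vtx i - w) ≤ 0)) := by
      apply Filter.Eventually.and
      · rw [eventually_all]
        intro i
        rcases (hbotsup i).eq_or_lt with heq | hlt
        · obtain ⟨s, hs⟩ := exists_smul_of_cross2_eq_zero hd heq.symm
          have hs0 : 0 ≤ s := Hbot i s (by rw [← hs]; abel)
          filter_upwards [self_mem_nhdsWithin] with ε hε
          rw [Set.mem_Ioi] at hε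
          rw [cross2_add_left, cross2_smul_left, ← heq, hs, cross2_smul_right]
          have hprod := mul_nonneg hε.le (mul_nonneg hs0 hqdpos.le)
          linarith
        · filter_upwards [ev_nhdsGT_nonneg (B := cross2 q (Q.vtx i - v)) hlt] with ε hε
          rw [cross2_add_left, cross2_smul_left]
          exact hε
      · rw [eventually_all]
        intro i
        rcases (htopsup i).lt_or_eq with hlt | heq
        · filter_upwards [ev_nhdsGT_neg (B := cross2 q (Q.vtx i - w)) hlt] with ε hε
          apply ev_atTop_nonpos
          rw [cross2_add_left, cross2_smul_left]
          exact hε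
        · obtain ⟨r, hr⟩ := exists_smul_of_cross2_eq_zero hd heq
          have hvtx : Q.vtx i = w + r • d := by rw [← hr]; abel
          rcases Htop i r hvtx with hwi | hrneg
          · apply Filter.Eventually.of_forall
            intro ε
            apply Filter.Eventually.of_forall
            intro t
            rw [hwi, sub_self, cross2_zero_right, cross2_zero_right]
            simp
          · filter_upwards [self_mem_nhdsWithin] with ε hε
            rw [Set.mem_Ioi] at hε
            apply ev_atTop_nonpos
            rw [cross2_add_left, cross2_smul_left, hr, cross2_smul_right, cross2_smul_right,
              cross2_self]
            nlinarith [mul_neg_of_neg_of_pos hrneg (mul_pos hε hqdpos)]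
    obtain ⟨ε, ⟨hH1, hH2⟩, hεpos⟩ := (hev.and self_mem_nhdsWithin).exists
    have hε0 : (0:ℝ) < ε := hεpos
    have hune : d + ε • q ≠ 0 := by
      intro h
      have h' := congrArg (cross2 q) h
      rw [cross2_add_right, cross2_smul_right, cross2_self, cross2_zero_right] at h'
      nlinarith
    exact Q.tile_unbounded v w (d + ε • q) ⟨iv, hiv⟩ ⟨iw, hiw⟩ hune hH1 hH2
  · -- no perturbation needed: use u = d
    push_neg at hB
    apply Q.tile_unbounded v w d ⟨iv, hiv⟩ ⟨iw, hiw⟩ hd hbotsup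
    intro i
    rcases (htopsup i).lt_or_eq with hlt | heq
    · exact ev_atTop_nonpos hlt
    · obtain ⟨r, hr⟩ := exists_smul_of_cross2_eq_zero hd heq
      have hvtx : Q.vtx i = w + r • d := by rw [← hr]; abel
      have hr0 : 0 ≤ r := hB i r hvtx
      apply Filter.Eventually.of_forall
      intro t
      rw [heq, hr, cross2_smul_right, hcwd, mul_zero, add_zero]
      nlinarith

end NicePolygon
end MyAux3

/-- Every maximal pair `(v, w)` labels a tile of the forward partition; indeed both the
region labelled `(v, w)` and the region labelled `(w, v)` are unbounded. -/
theorem maximal_pair_labels_unbounded_tile (Q : NicePolygon) (v w : ℝ × ℝ)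
    (h : Q.MaximalPair v w) :
    ¬ Bornology.IsBounded (Q.tile v w) ∧ ¬ Bornology.IsBounded (Q.tile w v) := by
  obtain ⟨hv, hw, d, c₁, c₂, hd, hc, hmin, hcase⟩ := h
  have hcont : Continuous fun x : ℝ × ℝ => cross2 d x := by
    unfold cross2; fun_prop
  have hScl : IsClosed {x : ℝ × ℝ | c₁ ≤ cross2 d x ∧ cross2 d x ≤ c₂} := by
    have hset : {x : ℝ × ℝ | c₁ ≤ cross2 d x ∧ cross2 d x ≤ c₂}
        = (fun x : ℝ × ℝ => cross2 d x) ⁻¹' (Set.Icc c₁ c₂) := rfl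
    rw [hset]
    exact isClosed_Icc.preimage hcont
  have hsub : interior Q.body ⊆ {x : ℝ × ℝ | c₁ ≤ cross2 d x ∧ cross2 d x ≤ c₂} :=
    hmin.2.1.trans interior_subset
  have hall : ∀ i, c₁ ≤ cross2 d (Q.vtx i) ∧ cross2 d (Q.vtx i) ≤ c₂ := fun i =>
    Q.body_subset_closed hScl hsub (Q.vtx_mem_body i)
  have hall' : ∀ i, -c₂ ≤ cross2 (-d) (Q.vtx i) ∧ cross2 (-d) (Q.vtx i) ≤ -c₁ := by
    intro i
    rw [cross2_neg_left]
    constructor <;> linarith [(hall i).1, (hall i).2]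
  have hdneg : (-d : ℝ × ℝ) ≠ 0 := neg_ne_zero.2 hd
  rcases hcase with ⟨h1, h2⟩ | ⟨h1, h2⟩
  · exact ⟨Q.unbounded_of_strip_data v w d c₁ c₂ hd hc hv hw h1 h2 hall,
      Q.unbounded_of_strip_data w v (-d) (-c₂) (-c₁) hdneg (by linarith) hw hv
        (by rw [cross2_neg_left, h2]) (by rw [cross2_neg_left, h1]) hall'⟩
  · exact ⟨Q.unbounded_of_strip_data v w (-d) (-c₂) (-c₁) hdneg (by linarith) hv hw
        (by rw [cross2_neg_left, h1]) (by rw [cross2_neg_left, h2]) hall',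
      Q.unbounded_of_strip_data w v d c₁ c₂ hd hc hw hv h2 h1 hall⟩
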